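/- Under the hypotheses that span{z₁,…,zₙ} = ℝ^p, ρ is strictly increasing and ρ(eˣ) is strictly convex, the function L₀(Σ) = Σᵢ ρ(zᵢᵀΣ⁻¹zᵢ) + (n/2) log det Σ is geodesically strictly convex on S₊₊(p); in particular L₀ has at most one minimizer. -/

import Mathlib

open Matrix

noncomputable def mpow {p : ℕ} (A : Matrix (Fin p) (Fin p) ℝ) (t : ℝ) :
    Matrix (Fin p) (Fin p) ℝ :=
  if h : A.IsHermitian then
    (h.eigenvectorUnitary : Matrix (Fin p) (Fin p) ℝ) *
      Matrix.diagonal (fun i => h.eigenvalues i ^ t) *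
      (star (h.eigenvectorUnitary : Matrix (Fin p) (Fin p) ℝ))
  else A

/-- The geodesic `γ(t) = S1^{1/2} (S1^{-1/2} S2 S1^{-1/2})^t S1^{1/2}` on `S₊₊(p)`. -/
noncomputable def geo {p : ℕ} (A B : Matrix (Fin p) (Fin p) ℝ) (t : ℝ) :
    Matrix (Fin p) (Fin p) ℝ :=
  mpow A (1/2) * mpow (mpow A (-(1/2)) * B * mpow A (-(1/2))) t * mpow A (1/2)

/-!
Write `γ(t) = S₁^{1/2} M^t S₁^{1/2}` with `M = S₁^{-1/2} S₂ S₁^{-1/2} = U diag(λ) Uᵀ`. Then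
`log det γ(t) = log det S₁ + t log det M` is affine in `t`, and
`zᵀ γ(t)⁻¹ z = ∑ₖ cₖ exp (lₖ t)` with `cₖ = ((Uᵀ S₁^{-1/2} z)ₖ)² ≥ 0` and `lₖ = -log λₖ`.
By Hölder, `t ↦ log ∑ₖ cₖ exp (lₖ t)` is convex, so each `ρ (zᵢᵀ γ(t)⁻¹ zᵢ)` is convex in `t`,
as `ρ ∘ exp` is convex and `ρ` is increasing. If `S₁ ≠ S₂`, some `λₖ ≠ 1`, and since the `zᵢ`
span, some `zᵢ` has `cₖ ≠ 0`; for that summand, either its values at `t = 0, 1` differ and strict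
convexity of `ρ ∘ exp` applies, or they agree and strict convexity of `exp` already makes the
argument of `ρ` drop strictly. Two distinct minimizers would contradict this at `t = 1/2`.
-/

open Real Finset Unitary

section ExpSums

variable {ι : Type*} [Fintype ι] {c l : ι → ℝ} {t : ℝ}

lemma sum_mul_exp_mul_le_rpow (hc : ∀ k, 0 ≤ c k) (ht0 : 0 < t) (ht1 : t ≤ 1) :
    ∑ k, c k * exp (l k * t) ≤ (∑ k, c k) ^ (1 - t) * (∑ k, c k * exp (l k)) ^ t := by
  have := inner_le_weight_mul_Lp_of_nonneg univ (one_le_inv₀ ht0 |>.2 ht1) c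
    (fun k => exp (l k * t)) hc fun k => (exp_pos _).le
  simpa only [inv_inv, ← exp_mul, mul_assoc, mul_inv_cancel₀ ht0.ne', mul_one] using this

lemma sum_mul_exp_mul_lt (hc : ∀ k, 0 ≤ c k) (hcl : ∃ k, c k ≠ 0 ∧ l k ≠ 0)
    (ht : t ∈ Set.Ioo 0 1) :
    ∑ k, c k * exp (l k * t) < (1 - t) * ∑ k, c k + t * ∑ k, c k * exp (l k) := by
  obtain ⟨ht0, ht1⟩ := ht
  have hexp : ∀ k, exp (l k * t) ≤ (1 - t) + t * exp (l k) := fun k => by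
    simpa [mul_comm] using
      convexOn_exp.2 (Set.mem_univ 0) (Set.mem_univ (l k)) (sub_nonneg.2 ht1.le) ht0.le (by ring)
  obtain ⟨k₀, hc₀, hl₀⟩ := hcl
  have hexp₀ : exp (l k₀ * t) < (1 - t) + t * exp (l k₀) := by
    simpa [mul_comm] using strictConvexOn_exp.2 (Set.mem_univ 0) (Set.mem_univ (l k₀))
      hl₀.symm (sub_pos.2 ht1) ht0 (by ring)
  rw [mul_sum, mul_sum, ← sum_add_distrib]
  refine sum_lt_sum (fun k _ => ?_) ⟨k₀, mem_univ _, ?_⟩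
  · linarith [mul_le_mul_of_nonneg_left (hexp k) (hc k)]
  · linarith [mul_lt_mul_of_pos_left hexp₀ ((hc k₀).lt_of_ne' hc₀)]

variable {ρ : ℝ → ℝ}

lemma apply_sum_mul_exp_mul_lt (hmono : StrictMonoOn ρ (Set.Ioi 0))
    (hconv : StrictConvexOn ℝ Set.univ (fun x : ℝ => ρ (exp x)))
    (hc : ∀ k, 0 ≤ c k) (hcl : ∃ k, c k ≠ 0 ∧ l k ≠ 0) (ht : t ∈ Set.Ioo 0 1) :
    ρ (∑ k, c k * exp (l k * t)) < (1 - t) * ρ (∑ k, c k) + t * ρ (∑ k, c k * exp (l k)) := by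
  obtain ⟨k₀, hc₀, hl₀⟩ := hcl
  have hpos : ∀ s, 0 < ∑ k, c k * exp (l k * s) := fun s =>
    sum_pos' (fun k _ => mul_nonneg (hc k) (exp_pos _).le)
      ⟨k₀, mem_univ _, mul_pos ((hc k₀).lt_of_ne' hc₀) (exp_pos _)⟩
  set X := ∑ k, c k
  set Y := ∑ k, c k * exp (l k)
  have hX : 0 < X := by simpa using hpos 0
  have hY : 0 < Y := by simpa using hpos 1
  rcases eq_or_ne X Y with hXY | hXY
  · have hlt := sum_mul_exp_mul_lt hc ⟨k₀, hc₀, hl₀⟩ ht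
    change _ < (1 - t) * X + t * Y at hlt
    rw [← hXY] at hlt
    calc ρ (∑ k, c k * exp (l k * t)) < ρ X := hmono (hpos t) hX (by linarith)
      _ = (1 - t) * ρ X + t * ρ Y := by rw [← hXY]; ring
  · have hgeom : X ^ (1 - t) * Y ^ t = exp ((1 - t) * log X + t * log Y) := by
      rw [rpow_def_of_pos hX, rpow_def_of_pos hY, ← exp_add]; ring_nf
    calc ρ (∑ k, c k * exp (l k * t)) ≤ ρ (exp ((1 - t) * log X + t * log Y)) := by
          rw [← hgeom]
          exact hmono.monotoneOn (hpos t) (by rw [hgeom]; exact exp_pos _)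
            (sum_mul_exp_mul_le_rpow hc ht.1 ht.2.le)
      _ < (1 - t) * ρ (exp (log X)) + t * ρ (exp (log Y)) :=
          hconv.2 (Set.mem_univ _) (Set.mem_univ _) (fun h => hXY (log_injOn_pos hX hY h))
            (sub_pos.2 ht.2) ht.1 (by ring)
      _ = (1 - t) * ρ X + t * ρ Y := by rw [exp_log hX, exp_log hY]

lemma apply_sum_mul_exp_mul_le (hmono : StrictMonoOn ρ (Set.Ioi 0))
    (hconv : StrictConvexOn ℝ Set.univ (fun x : ℝ => ρ (exp x)))
    (hc : ∀ k, 0 ≤ c k) (ht : t ∈ Set.Ioo 0 1) :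
    ρ (∑ k, c k * exp (l k * t)) ≤ (1 - t) * ρ (∑ k, c k) + t * ρ (∑ k, c k * exp (l k)) := by
  by_cases hcl : ∃ k, c k ≠ 0 ∧ l k ≠ 0
  · exact (apply_sum_mul_exp_mul_lt hmono hconv hc hcl ht).le
  push Not at hcl
  have hconst : ∀ s, ∑ k, c k * exp (l k * s) = ∑ k, c k := fun s =>
    sum_congr rfl fun k _ => by
      rcases eq_or_ne (c k) 0 with h | h
      · rw [h, zero_mul]
      · rw [hcl k h, zero_mul, exp_zero, mul_one]
  have h1 : ∑ k, c k * exp (l k) = ∑ k, c k := by simpa using hconst 1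
  rw [hconst, h1]
  linarith

end ExpSums

lemma Matrix.IsHermitian.eq_one_of_eigenvalues_eq_one {n 𝕜 : Type*} [RCLike 𝕜] [Fintype n]
    [DecidableEq n] {A : Matrix n n 𝕜} (hA : A.IsHermitian) (h : ∀ i, hA.eigenvalues i = 1) :
    A = 1 := by
  rw [hA.spectral_theorem]
  simp [show hA.eigenvalues = 1 from funext h, Function.comp_def]

lemma exists_mulVec_apply_ne_zero_of_span_eq_top {ι m R : Type*} [CommRing R] [LinearOrder R]
    [IsStrictOrderedRing R] [Fintype m] [DecidableEq m]
    {z : ι → m → R} (hspan : Submodule.span R (Set.range z) = ⊤)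
    {W : Matrix m m R} (hW : W.det ≠ 0) (k : m) : ∃ i, (W *ᵥ z i) k ≠ 0 := by
  by_contra! h
  have hrow : ∀ v, (W *ᵥ v) k = 0 := fun v =>
    LinearMap.congr_fun (LinearMap.ext_on_range (f := (LinearMap.proj k).comp W.mulVecLin)
      (g := 0) hspan h) v
  exact hW <| det_eq_zero_of_row_eq_zero k <| congrFun <| dotProduct_self_eq_zero.1 (hrow (W k))

section MatrixPower

variable {p : ℕ} {A : Matrix (Fin p) (Fin p) ℝ}

lemma mpow_eq_conjStarAlgAut (hA : A.IsHermitian) (t : ℝ) :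
    mpow A t = conjStarAlgAut ℝ _ hA.eigenvectorUnitary
      (diagonal fun i => hA.eigenvalues i ^ t) := by
  rw [mpow, dif_pos hA, conjStarAlgAut_apply]

lemma mpow_add (hA : A.PosDef) (s t : ℝ) : mpow A (s + t) = mpow A s * mpow A t := by
  simp only [mpow_eq_conjStarAlgAut hA.isHermitian, ← map_mul, diagonal_mul_diagonal,
    rpow_add (hA.eigenvalues_pos _)]

lemma mpow_zero (hA : A.IsHermitian) : mpow A 0 = 1 := by
  simp [mpow_eq_conjStarAlgAut hA]

lemma mpow_one (hA : A.IsHermitian) : mpow A 1 = A := by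
  conv_rhs => rw [hA.spectral_theorem]
  simp [mpow_eq_conjStarAlgAut hA, RCLike.ofReal_real_eq_id]

lemma mpow_posDef (hA : A.PosDef) (t : ℝ) : (mpow A t).PosDef := by
  rw [mpow_eq_conjStarAlgAut hA.isHermitian, conjStarAlgAut_apply,
    IsUnit.posDef_star_right_conjugate_iff isUnit_coe]
  exact posDef_diagonal_iff.2 fun i => rpow_pos_of_pos (hA.eigenvalues_pos i) t

lemma mpow_neg (hA : A.PosDef) (t : ℝ) : mpow A (-t) = (mpow A t)⁻¹ :=
  (inv_eq_left_inv (by rw [← mpow_add hA, neg_add_cancel, mpow_zero hA.isHermitian])).symm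

lemma det_mpow (hA : A.PosDef) (t : ℝ) : (mpow A t).det = A.det ^ t := by
  rw [mpow_eq_conjStarAlgAut hA.isHermitian, conjStarAlgAut_apply, det_mul, det_mul,
    mul_right_comm, ← det_mul, mul_star_self_of_mem (Subtype.prop _), det_one, one_mul,
    det_diagonal, hA.isHermitian.det_eq_prod_eigenvalues, RCLike.ofReal_real_eq_id]
  exact finsetProd_rpow _ _ (fun i _ => (hA.eigenvalues_pos i).le) t

lemma dotProduct_mpow_mulVec (hA : A.IsHermitian) (t : ℝ) (v : Fin p → ℝ) :
    v ⬝ᵥ mpow A t *ᵥ v =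
      ∑ k, (star (hA.eigenvectorUnitary : Matrix (Fin p) (Fin p) ℝ) *ᵥ v) k ^ 2 *
        hA.eigenvalues k ^ t := by
  rw [mpow_eq_conjStarAlgAut hA, conjStarAlgAut_apply, ← mulVec_mulVec, ← mulVec_mulVec,
    dotProduct_mulVec, star_eq_conjTranspose, conjTranspose_eq_transpose_of_trivial,
    ← mulVec_transpose, dotProduct]
  exact sum_congr rfl fun k _ => by rw [mulVec_diagonal]; ring

end MatrixPower

section Geodesic

variable {p : ℕ}

noncomputable def whitened (S1 S2 : Matrix (Fin p) (Fin p) ℝ) : Matrix (Fin p) (Fin p) ℝ :=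
  mpow S1 (-(1/2)) * S2 * mpow S1 (-(1/2))

variable {S1 S2 : Matrix (Fin p) (Fin p) ℝ}

lemma geo_eq (t : ℝ) : geo S1 S2 t = mpow S1 (1/2) * mpow (whitened S1 S2) t * mpow S1 (1/2) :=
  rfl

lemma mpow_half_mul_mpow_half (hS1 : S1.PosDef) : mpow S1 (1/2) * mpow S1 (1/2) = S1 := by
  rw [← mpow_add hS1, add_halves, mpow_one hS1.isHermitian]

lemma mpow_half_mul_whitened_mul_mpow_half (hS1 : S1.PosDef) :
    mpow S1 (1/2) * whitened S1 S2 * mpow S1 (1/2) = S2 := by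
  have hl : mpow S1 (1/2) * mpow S1 (-(1/2)) = 1 := by
    rw [← mpow_add hS1, add_neg_cancel, mpow_zero hS1.isHermitian]
  have hr : mpow S1 (-(1/2)) * mpow S1 (1/2) = 1 := by
    rw [← mpow_add hS1, neg_add_cancel, mpow_zero hS1.isHermitian]
  simp only [whitened, ← mul_assoc, hl, one_mul]
  rw [mul_assoc, hr, mul_one]

lemma whitened_posDef (hS1 : S1.PosDef) (hS2 : S2.PosDef) : (whitened S1 S2).PosDef := by
  have hC := mpow_posDef hS1 (-(1/2))
  rw [whitened]
  nth_rw 2 [← hC.isHermitian.eq]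
  exact (IsUnit.posDef_star_right_conjugate_iff hC.isUnit).2 hS2

lemma geo_zero (hS1 : S1.PosDef) (hS2 : S2.PosDef) : geo S1 S2 0 = S1 := by
  rw [geo_eq, mpow_zero (whitened_posDef hS1 hS2).isHermitian, mul_one,
    mpow_half_mul_mpow_half hS1]

lemma geo_one (hS1 : S1.PosDef) (hS2 : S2.PosDef) : geo S1 S2 1 = S2 := by
  rw [geo_eq, mpow_one (whitened_posDef hS1 hS2).isHermitian,
    mpow_half_mul_whitened_mul_mpow_half hS1]

lemma geo_posDef (hS1 : S1.PosDef) (hS2 : S2.PosDef) (t : ℝ) : (geo S1 S2 t).PosDef := by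
  have hH := mpow_posDef hS1 (1/2)
  rw [geo_eq]
  nth_rw 2 [← hH.isHermitian.eq]
  exact (IsUnit.posDef_star_right_conjugate_iff hH.isUnit).2
    (mpow_posDef (whitened_posDef hS1 hS2) t)

lemma log_det_geo (hS1 : S1.PosDef) (hS2 : S2.PosDef) (t : ℝ) :
    log (geo S1 S2 t).det = log S1.det + t * log (whitened S1 S2).det := by
  have hM := whitened_posDef hS1 hS2
  rw [geo_eq, det_mul, det_mul, mul_right_comm, ← det_mul, mpow_half_mul_mpow_half hS1,
    det_mpow hM, log_mul hS1.det_pos.ne' (rpow_pos_of_pos hM.det_pos t).ne',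
    log_rpow hM.det_pos]

lemma geo_inv (hS1 : S1.PosDef) (hS2 : S2.PosDef) (t : ℝ) :
    (geo S1 S2 t)⁻¹ = mpow S1 (-(1/2)) * mpow (whitened S1 S2) (-t) * mpow S1 (-(1/2)) := by
  rw [geo_eq, Matrix.mul_inv_rev, Matrix.mul_inv_rev, ← mpow_neg hS1,
    ← mpow_neg (whitened_posDef hS1 hS2), mul_assoc]

lemma eq_of_whitened_eq_one (hS1 : S1.PosDef) (h : whitened S1 S2 = 1) : S1 = S2 := by
  have := mpow_half_mul_whitened_mul_mpow_half (S2 := S2) hS1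
  rwa [h, mul_one, mpow_half_mul_mpow_half hS1] at this

lemma exists_dotProduct_geo_inv_mulVec_eq_sum_exp (hS1 : S1.PosDef) (hS2 : S2.PosDef) :
    ∃ (W : Matrix (Fin p) (Fin p) ℝ) (l : Fin p → ℝ), W.det ≠ 0 ∧ (S1 ≠ S2 → ∃ k, l k ≠ 0) ∧
      ∀ t v, v ⬝ᵥ (geo S1 S2 t)⁻¹ *ᵥ v = ∑ k, (W *ᵥ v) k ^ 2 * exp (l k * t) := by
  have hM := whitened_posDef hS1 hS2
  have hC := mpow_posDef hS1 (-(1/2))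
  refine ⟨star (hM.isHermitian.eigenvectorUnitary : Matrix (Fin p) (Fin p) ℝ) *
      mpow S1 (-(1/2)), fun k => -log (hM.isHermitian.eigenvalues k), ?_, ?_, ?_⟩
  · rw [det_mul, ← Unitary.coe_star]
    exact mul_ne_zero (UnitaryGroup.det_isUnit _).ne_zero hC.det_pos.ne'
  · intro hne
    by_contra! h
    refine hne <| eq_of_whitened_eq_one hS1 <|
      hM.isHermitian.eq_one_of_eigenvalues_eq_one fun k => ?_
    rw [← exp_log (hM.eigenvalues_pos k), neg_eq_zero.1 (h k), exp_zero]
  · intro t v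
    rw [geo_inv hS1 hS2, ← mulVec_mulVec, ← mulVec_mulVec, dotProduct_mulVec,
      ← mulVec_transpose, ← conjTranspose_eq_transpose_of_trivial, hC.isHermitian.eq,
      dotProduct_mpow_mulVec hM.isHermitian, mulVec_mulVec]
    refine sum_congr rfl fun k _ => ?_
    rw [rpow_def_of_pos (hM.eigenvalues_pos k), neg_mul_comm]

noncomputable def L0 {n : ℕ} (z : Fin n → Fin p → ℝ) (ρ : ℝ → ℝ)
    (S : Matrix (Fin p) (Fin p) ℝ) : ℝ :=
  ∑ i, ρ (z i ⬝ᵥ S⁻¹ *ᵥ z i) + (n / 2 : ℝ) * log S.det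

lemma L0_geo_lt {n : ℕ} {z : Fin n → Fin p → ℝ} (hspan : Submodule.span ℝ (Set.range z) = ⊤)
    {ρ : ℝ → ℝ} (hmono : StrictMonoOn ρ (Set.Ioi 0))
    (hconv : StrictConvexOn ℝ Set.univ (fun x : ℝ => ρ (exp x)))
    (hS1 : S1.PosDef) (hS2 : S2.PosDef) (hne : S1 ≠ S2) {t : ℝ} (ht : t ∈ Set.Ioo 0 1) :
    L0 z ρ (geo S1 S2 t) < (1 - t) * L0 z ρ S1 + t * L0 z ρ S2 := by
  obtain ⟨W, l, hW, hl, hquad⟩ := exists_dotProduct_geo_inv_mulVec_eq_sum_exp hS1 hS2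
  obtain ⟨k, hk⟩ := hl hne
  obtain ⟨i₀, hi₀⟩ := exists_mulVec_apply_ne_zero_of_span_eq_top hspan hW k
  have hL0 : ∀ s, L0 z ρ (geo S1 S2 s) = ∑ i, ρ (∑ k, (W *ᵥ z i) k ^ 2 * exp (l k * s)) +
      (n / 2 : ℝ) * (log S1.det + s * log (whitened S1 S2).det) := fun s => by
    simp only [L0, hquad, log_det_geo hS1 hS2]
  have hL0_zero : L0 z ρ S1 = ∑ i, ρ (∑ k, (W *ᵥ z i) k ^ 2) + (n / 2 : ℝ) * log S1.det := by
    simpa only [geo_zero hS1 hS2, mul_zero, exp_zero, mul_one, zero_mul, add_zero] using hL0 0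
  have hL0_one : L0 z ρ S2 = ∑ i, ρ (∑ k, (W *ᵥ z i) k ^ 2 * exp (l k)) +
      (n / 2 : ℝ) * (log S1.det + log (whitened S1 S2).det) := by
    simpa only [geo_one hS1 hS2, mul_one, one_mul] using hL0 1
  have hsum := sum_lt_sum
    (fun i _ => apply_sum_mul_exp_mul_le hmono hconv (c := fun k => (W *ᵥ z i) k ^ 2)
      (l := l) (fun k => sq_nonneg _) ht)
    ⟨i₀, mem_univ _, apply_sum_mul_exp_mul_lt hmono hconv (fun k => sq_nonneg _)
      ⟨k, pow_ne_zero 2 hi₀, hk⟩ ht⟩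
  rw [sum_add_distrib, ← mul_sum, ← mul_sum] at hsum
  rw [hL0, hL0_zero, hL0_one]
  linarith

end Geodesic

theorem L0_geodesically_strictly_convex_general {p n : ℕ} (z : Fin n → Fin p → ℝ)
    (hspan : Submodule.span ℝ (Set.range z) = ⊤) (ρ : ℝ → ℝ)
    (hmono : StrictMonoOn ρ (Set.Ioi 0))
    (hconv : StrictConvexOn ℝ Set.univ (fun x : ℝ => ρ (Real.exp x))) :
    (∀ (S1 S2 : Matrix (Fin p) (Fin p) ℝ), S1.PosDef → S2.PosDef → S1 ≠ S2 →
      ∀ t ∈ Set.Ioo (0:ℝ) 1,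
        (∑ i, ρ (z i ⬝ᵥ (geo S1 S2 t)⁻¹ *ᵥ z i)
            + (n / 2 : ℝ) * Real.log (geo S1 S2 t).det) <
          (1 - t) * (∑ i, ρ (z i ⬝ᵥ S1⁻¹ *ᵥ z i) + (n / 2 : ℝ) * Real.log S1.det)
            + t * (∑ i, ρ (z i ⬝ᵥ S2⁻¹ *ᵥ z i) + (n / 2 : ℝ) * Real.log S2.det)) ∧
    (∀ (S1 S2 : Matrix (Fin p) (Fin p) ℝ), S1.PosDef → S2.PosDef →
      (∀ S' : Matrix (Fin p) (Fin p) ℝ, S'.PosDef →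
        (∑ i, ρ (z i ⬝ᵥ S1⁻¹ *ᵥ z i) + (n / 2 : ℝ) * Real.log S1.det) ≤
          (∑ i, ρ (z i ⬝ᵥ S'⁻¹ *ᵥ z i) + (n / 2 : ℝ) * Real.log S'.det)) →
      (∀ S' : Matrix (Fin p) (Fin p) ℝ, S'.PosDef →
        (∑ i, ρ (z i ⬝ᵥ S2⁻¹ *ᵥ z i) + (n / 2 : ℝ) * Real.log S2.det) ≤
          (∑ i, ρ (z i ⬝ᵥ S'⁻¹ *ᵥ z i) + (n / 2 : ℝ) * Real.log S'.det)) →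
      S1 = S2) := by
  refine ⟨fun S1 S2 hS1 hS2 hne t ht => L0_geo_lt hspan hmono hconv hS1 hS2 hne ht,
    fun S1 S2 hS1 hS2 hmin1 hmin2 => ?_⟩
  by_contra hne
  have hmid := L0_geo_lt hspan hmono hconv hS1 hS2 hne (t := 1/2) ⟨by norm_num, by norm_num⟩
  have h1 : L0 z ρ S1 ≤ L0 z ρ (geo S1 S2 (1/2)) := hmin1 _ (geo_posDef hS1 hS2 _)
  have h2 : L0 z ρ S2 ≤ L0 z ρ (geo S1 S2 (1/2)) := hmin2 _ (geo_posDef hS1 hS2 _)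
  linarith

theorem L0_geodesically_strictly_convex {p n : ℕ} (z : Fin n → Fin p → ℝ)
    (hspan : Submodule.span ℝ (Set.range z) = ⊤) (ρ : ℝ → ℝ)
    (hcont : ContinuousOn ρ (Set.Ioi 0))
    (hmono : StrictMonoOn ρ (Set.Ioi 0))
    (hconv : StrictConvexOn ℝ Set.univ (fun x : ℝ => ρ (Real.exp x))) :
    (∀ (S1 S2 : Matrix (Fin p) (Fin p) ℝ), S1.PosDef → S2.PosDef → S1 ≠ S2 →
      ∀ t ∈ Set.Ioo (0:ℝ) 1,
        (∑ i, ρ (z i ⬝ᵥ (geo S1 S2 t)⁻¹ *ᵥ z i)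
            + (n / 2 : ℝ) * Real.log (geo S1 S2 t).det) <
          (1 - t) * (∑ i, ρ (z i ⬝ᵥ S1⁻¹ *ᵥ z i) + (n / 2 : ℝ) * Real.log S1.det)
            + t * (∑ i, ρ (z i ⬝ᵥ S2⁻¹ *ᵥ z i) + (n / 2 : ℝ) * Real.log S2.det)) ∧
    (∀ (S1 S2 : Matrix (Fin p) (Fin p) ℝ), S1.PosDef → S2.PosDef →
      (∀ S' : Matrix (Fin p) (Fin p) ℝ, S'.PosDef →
        (∑ i, ρ (z i ⬝ᵥ S1⁻¹ *ᵥ z i) + (n / 2 : ℝ) * Real.log S1.det) ≤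
          (∑ i, ρ (z i ⬝ᵥ S'⁻¹ *ᵥ z i) + (n / 2 : ℝ) * Real.log S'.det)) →
      (∀ S' : Matrix (Fin p) (Fin p) ℝ, S'.PosDef →
        (∑ i, ρ (z i ⬝ᵥ S2⁻¹ *ᵥ z i) + (n / 2 : ℝ) * Real.log S2.det) ≤
          (∑ i, ρ (z i ⬝ᵥ S'⁻¹ *ᵥ z i) + (n / 2 : ℝ) * Real.log S'.det)) →
      S1 = S2) :=
  L0_geodesically_strictly_convex_general z hspan ρ hmono hconv
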